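/- For every infinite cardinal λ and every positive integer c, there exists a cardinal κ > λ such that for every commutative semigroup (G,+) of cardinality κ and every coloring f : G → c, there exist a subset H ⊆ G of cardinality λ and positive integers a, b such that all sums of a-many distinct elements of H, all sums of b-many distinct elements of H, and all sums of (a+b)-many distinct elements of H have the same color under f. -/

import Mathlib

/-!
Write `N` for a Schur number of `c` colours. By the Erdős–Rado theorem, in a well-ordered set of
size above the `N`-fold iterated power of `λ` there is a set of size `> λ` on which all
`(N+1)`-sets get the same colours for the sums of their initial segments. On its elements
followed by infinitely many others, the colour of the sum of a `k`-set (`k ≤ N+1`) therefore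
depends only on `k`, and Schur's theorem applied to this colouring of sizes gives `a`, `b`.

The Erdős–Rado step goes through end-homogeneous sets: for each point `a` one builds a
transfinite sequence of points that the colouring cannot tell apart from `a` over the earlier
terms. If every such sequence returned to its starting point, each point would be coded by the
return stage and at most `2^κ` colours, too few for a set of size `> 2^κ`.
-/

open Cardinal

universe u

/-- Sum of a nonempty tuple of elements of a commutative semigroup. -/
def tupSum {G : Type u} [AddCommSemigroup G] : {n : ℕ} → (Fin (n + 1) → G) → G
  | 0, g => g 0
  | _ + 1, g => tupSum (fun i => g i.castSucc) + g (Fin.last _)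

/-- `FSMono f A H i` : all sums of `j`-many pairwise distinct elements of `H`,
for `j ∈ A`, have color `i` under `f` (i.e. `FS^A(H)` is monochromatic of color `i`). -/
def FSMono {G : Type u} [AddCommSemigroup G] {c : ℕ} (f : G → Fin c)
    (A : Set ℕ) (H : Set G) (i : Fin c) : Prop :=
  ∀ m : ℕ, m + 1 ∈ A → ∀ g : Fin (m + 1) → G, Function.Injective g →
    (∀ j, g j ∈ H) → f (tupSum g) = i

theorem exists_monochromatic_triangle {α κ : Type*} [LinearOrder α] (k : ℕ) :
    ∃ M : ℕ, ∀ C : Finset κ, C.card ≤ k → ∀ V : Finset α, M ≤ V.card → ∀ χ : α → α → κ,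
      (∀ x ∈ V, ∀ y ∈ V, x < y → χ x y ∈ C) →
      ∃ x ∈ V, ∃ y ∈ V, ∃ z ∈ V, x < y ∧ y < z ∧ χ x y = χ y z ∧ χ x z = χ y z := by
  classical
  induction k with
  | zero =>
    refine ⟨2, fun C hC V hV χ hχ => ?_⟩
    obtain ⟨x, y, hx, hy, hxy⟩ := Finset.one_lt_card_iff.1 (by omega : 1 < V.card)
    rw [Nat.le_zero, Finset.card_eq_zero] at hC
    subst hC
    rcases hxy.lt_or_gt with h | h
    · exact absurd (hχ x hx y hy h) (Finset.notMem_empty _)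
    · exact absurd (hχ y hy x hx h) (Finset.notMem_empty _)
  | succ k ih =>
    obtain ⟨M, hM⟩ := ih
    refine ⟨(k + 1) * M + 2, fun C hC V hV χ hχ => ?_⟩
    have hVne : V.Nonempty := Finset.card_pos.1 (by omega)
    set v := V.max' hVne
    have hv : v ∈ V := V.max'_mem hVne
    have hlt : ∀ x ∈ V.erase v, x < v := fun x hx => V.lt_max'_of_mem_erase_max' hVne hx
    obtain ⟨i, hiC, hi⟩ := Finset.exists_lt_card_fiber_of_mul_lt_card_of_maps_to
      (f := fun x => χ x v) (fun x hx => hχ x (Finset.mem_of_mem_erase hx) v hv (hlt x hx))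
      (n := M) (by rw [Finset.card_erase_of_mem hv]; have := Nat.mul_le_mul_right M hC; omega)
    set Y := (V.erase v).filter fun x => χ x v = i
    have hYV : Y ⊆ V := (Finset.filter_subset _ _).trans (Finset.erase_subset _ _)
    have hYv : ∀ x ∈ Y, x < v ∧ χ x v = i := fun x hx =>
      ⟨hlt x (Finset.mem_of_mem_filter x hx), (Finset.mem_filter.1 hx).2⟩
    by_cases hi' : ∃ x ∈ Y, ∃ y ∈ Y, x < y ∧ χ x y = i
    · obtain ⟨x, hx, y, hy, hxy, hc⟩ := hi'
      exact ⟨x, hYV hx, y, hYV hy, v, hv, hxy, (hYv y hy).1, by rw [hc, (hYv y hy).2],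
        by rw [(hYv x hx).2, (hYv y hy).2]⟩
    · push Not at hi'
      obtain ⟨x, hx, y, hy, z, hz, h⟩ := hM (C.erase i)
        (by rw [Finset.card_erase_of_mem hiC]; omega) Y hi.le χ fun x hx y hy hxy =>
          Finset.mem_erase.2 ⟨hi' x hx y hy hxy, hχ x (hYV hx) y (hYV hy) hxy⟩
      exact ⟨x, hYV hx, y, hYV hy, z, hYV hz, h⟩

theorem exists_schur_bound (κ : Type*) [Fintype κ] :
    ∃ N : ℕ, ∀ d : ℕ → κ, ∃ a b : ℕ, 0 < a ∧ 0 < b ∧ a + b < N ∧ d a = d b ∧ d (a + b) = d a := by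
  obtain ⟨N, hN⟩ := exists_monochromatic_triangle (α := ℕ) (κ := κ) (Fintype.card κ)
  refine ⟨N, fun d => ?_⟩
  obtain ⟨x, hx, y, hy, z, hz, hxy, hyz, hxyz, hxzy⟩ := hN Finset.univ le_rfl (Finset.range N)
    (by simp) (fun x y => d (y - x)) (fun _ _ _ _ _ => Finset.mem_univ _)
  rw [Finset.mem_range] at hz
  refine ⟨y - x, z - y, by omega, by omega, by omega, hxyz, ?_⟩
  rw [show y - x + (z - y) = z - x by omega, hxzy, hxyz]

theorem Cardinal.mk_finset_le_max (β : Type u) : #(Finset β) ≤ max ℵ₀ #β := by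
  classical
  exact (mk_le_of_surjective List.toFinset_surjective).trans (mk_list_le_max β)

theorem Cardinal.mk_finset_arrow_le_two_power {κ : Cardinal.{u}} {β ι : Type u} (hκ : ℵ₀ ≤ κ)
    (hβ : #β ≤ κ) (hι : #ι ≤ κ) : #(Finset β → ι) ≤ 2 ^ κ :=
  calc #(Finset β → ι) = #ι ^ #(Finset β) := (power_def _ _).symm
    _ ≤ κ ^ κ := (power_le_power_right hι).trans <| power_le_power_left
        (aleph0_pos.trans_le hκ).ne' <| (mk_finset_le_max β).trans (max_le hκ hβ)
    _ = 2 ^ κ := power_self_eq hκ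

theorem exists_lt_mk_preimage_singleton {ν : Cardinal.{u}} (hν : ℵ₀ ≤ ν) {α ι : Type u}
    (hι : #ι ≤ ν) (hα : ν < #α) (g : α → ι) : ∃ i, ν < #(g ⁻¹' {i}) := by
  obtain ⟨i, hi⟩ := infinite_pigeonhole_card g (Order.succ ν) (Order.succ_le_of_lt hα)
    (hν.trans (Order.le_succ ν)) (by rw [(isRegular_succ hν).cof_ord]; exact Order.lt_succ_of_le hι)
  exact ⟨i, Order.succ_le_iff.1 hi⟩

section EndHomogeneous

variable {α ι : Type*} [DecidableEq α] (f : Finset α → ι) (n : ℕ)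

def endCandidates (a : α) (P : Set α) : Set α :=
  {p | p ∉ P ∧ ∀ s : Finset α, ↑s ⊆ P → s.card = n → f (insert p s) = f (insert a s)}

noncomputable def endStep (a : α) (P : Set α) : α :=
  @Classical.epsilon α ⟨a⟩ (· ∈ endCandidates f n a P)

theorem endStep_congr {a b : α} {P : Set α}
    (h : ∀ s : Finset α, ↑s ⊆ P → f (insert a s) = f (insert b s)) :
    endStep f n a P = endStep f n b P := by
  have : endCandidates f n a P = endCandidates f n b P := by
    ext p
    exact and_congr_right fun _ => forall₂_congr fun s hs => forall_congr' fun _ => by rw [h s hs]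
  rw [endStep, this]
  rfl

variable {W : Type*} [LinearOrder W] [WellFoundedLT W]

/-- As long as it avoids `a`, each term looks like `a` to `f` over the earlier terms. -/
noncomputable def endSeq (a : α) : W → α :=
  wellFounded_lt.fix fun w rec => endStep f n a (Set.range fun w' : Set.Iio w => rec w' w'.2)

theorem endSeq_eq (a : α) (w : W) : endSeq f n a w = endStep f n a (endSeq f n a '' Set.Iio w) := by
  rw [endSeq, WellFounded.fix_eq, Set.image_eq_range]

theorem endSeq_mem_endCandidates {a : α} {w : W} (h : ∀ w' < w, endSeq f n a w' ≠ a) :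
    endSeq f n a w ∈ endCandidates f n a (endSeq f n a '' Set.Iio w) := by
  rw [endSeq_eq]
  refine Classical.epsilon_spec (p := (· ∈ endCandidates f n a _)) ⟨a, ?_, fun _ _ _ => rfl⟩
  rintro ⟨w', hw', heq⟩
  exact h w' hw' heq

theorem endSeq_injective {a : α} (h : ∀ w : W, endSeq f n a w ≠ a) :
    Function.Injective (endSeq (W := W) f n a) := by
  have hne : ∀ w' w : W, w' < w → endSeq f n a w' ≠ endSeq f n a w := fun w' w hw' heq =>
    (endSeq_mem_endCandidates f n fun w'' _ => h w'').1 ⟨w', hw', heq⟩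
  intro w w' heq
  by_contra hww'
  rcases lt_or_gt_of_ne hww' with hlt | hlt
  exacts [hne _ _ hlt heq, hne _ _ hlt heq.symm]

theorem endSeq_eq_of_forall_image {a b : α} {w₀ : W}
    (h : ∀ t : Finset W, ↑t ⊆ Set.Iio w₀ →
      f (insert a (t.image (endSeq f n a))) = f (insert b (t.image (endSeq f n b)))) :
    endSeq f n a w₀ = endSeq f n b w₀ := by
  suffices ∀ w ≤ w₀, endSeq f n a w = endSeq f n b w from this w₀ le_rfl
  intro w
  induction w using WellFoundedLT.induction with
  | ind w ih =>
  intro hw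
  have hprefix : Set.EqOn (endSeq f n a) (endSeq f n b) (Set.Iio w) :=
    fun w' hw' => ih w' hw' (hw'.trans_le hw).le
  rw [endSeq_eq, endSeq_eq, ← Set.image_congr hprefix]
  refine endStep_congr f n fun s hs => ?_
  obtain ⟨t, ht, rfl⟩ := Finset.subset_set_image_iff.1 hs
  rw [h t (ht.trans (Set.Iio_subset_Iio hw)), Finset.image_congr (hprefix.mono ht)]

end EndHomogeneous

theorem mk_le_two_power_of_forall_endSeq_eq {κ : Cardinal.{u}} {α ι : Type u} [DecidableEq α]
    (hκ : ℵ₀ ≤ κ) (hι : #ι ≤ κ) (n : ℕ) (f : Finset α → ι)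
    (h : ∀ a : α, ∃ w : (Order.succ κ).ord.ToType, endSeq f n a w = a) : #α ≤ 2 ^ κ := by
  choose θ hθ using h
  calc #α ≤ #(Order.succ κ).ord.ToType * 2 ^ κ := mk_le_mk_mul_of_mk_preimage_le θ fun w => ?_
    _ ≤ 2 ^ κ * 2 ^ κ := by
        rw [mk_ord_toType]
        exact mul_le_mul_left (Order.succ_le_of_lt (cantor κ)) _
    _ = 2 ^ κ := mul_eq_self (hκ.trans (cantor κ).le)
  -- `a` is determined by the stage `θ a` where its sequence returns to it and by the colours
  -- of `a` over the earlier terms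
  refine le_trans (mk_le_of_injective (f := fun a : θ ⁻¹' {w} => fun t : Finset (Set.Iio w) =>
    f (insert a.1 ((t.image Subtype.val).image (endSeq f n a.1))))
    ?_) (mk_finset_arrow_le_two_power hκ ?_ hι)
  · rintro ⟨a, ha⟩ ⟨b, hb⟩ hab
    simp only [Set.mem_preimage, Set.mem_singleton_iff] at ha hb
    have hseq : endSeq f n a w = endSeq f n b w := endSeq_eq_of_forall_image f n fun t ht => by
      lift t to Finset (Set.Iio w) using ht
      exact congrFun hab t
    rw [← ha, hθ, ha, ← hb, hθ] at hseq
    exact Subtype.ext hseq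
  · exact Order.lt_succ_iff.1 <|
      (mk_Iio_lt w (by rw [mk_ord_toType, Ordinal.type_toType])).trans_eq (mk_ord_toType _)

theorem exists_endHomogeneous {κ : Cardinal.{u}} {α ι : Type u} [DecidableEq α] (hκ : ℵ₀ ≤ κ)
    (hι : #ι ≤ κ) (hα : 2 ^ κ < #α) (n : ℕ) (f : Finset α → ι) :
    ∃ (e : (Order.succ κ).ord.ToType → α) (a : α), Function.Injective e ∧
      ∀ w (t : Finset (Order.succ κ).ord.ToType), ↑t ⊆ Set.Iio w → t.card = n →
        f (insert (e w) (t.image e)) = f (insert a (t.image e)) := by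
  obtain ⟨a, ha⟩ : ∃ a : α, ∀ w : (Order.succ κ).ord.ToType, endSeq f n a w ≠ a := by
    by_contra! h
    exact hα.not_ge (mk_le_two_power_of_forall_endSeq_eq hκ hι n f h)
  have he := endSeq_injective f n ha
  refine ⟨endSeq f n a, a, he, fun w t ht htn =>
    (endSeq_mem_endCandidates f n fun w' _ => ha w').2 _ ?_ ?_⟩
  · rw [Finset.coe_image]
    exact Set.image_mono ht
  · rw [Finset.card_image_of_injective _ he, htn]

theorem le_iterate_two_power (ν : Cardinal) (n : ℕ) : ν ≤ (2 ^ ·)^[n] ν :=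
  Function.id_le_iterate_of_id_le (fun κ => (cantor κ).le) n ν

theorem erdos_rado {ν : Cardinal.{u}} (hν : ℵ₀ ≤ ν) {ι : Type u} (hι : #ι ≤ ν) (n : ℕ)
    {α : Type u} (hα : (2 ^ ·)^[n] ν < #α) (f : Finset α → ι) :
    ∃ (H : Set α) (i : ι), ν < #H ∧ ∀ s : Finset α, ↑s ⊆ H → s.card = n + 1 → f s = i := by
  classical
  induction n generalizing α with
  | zero =>
    obtain ⟨i, hi⟩ := exists_lt_mk_preimage_singleton hν hι hα fun x => f {x}
    refine ⟨_, i, hi, fun s hs hcard => ?_⟩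
    obtain ⟨x, rfl⟩ := Finset.card_eq_one.1 hcard
    exact hs (Finset.mem_singleton_self x)
  | succ n ih =>
    have hle := le_iterate_two_power ν n
    rw [Function.iterate_succ_apply'] at hα
    obtain ⟨e, a, he, hend⟩ :=
      exists_endHomogeneous (hν.trans hle) (hι.trans hle) hα (n + 1) f
    obtain ⟨H, i, hH, hHi⟩ := ih (by rw [mk_ord_toType]; exact Order.lt_succ _)
      fun t => f (insert a (t.image e))
    refine ⟨e '' H, i, by rwa [mk_image_eq he], fun s hs hcard => ?_⟩
    obtain ⟨t, htH, rfl⟩ := Finset.subset_set_image_iff.1 hs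
    rw [Finset.card_image_of_injective _ he] at hcard
    have ht : t.Nonempty := Finset.card_pos.1 (by omega)
    have hcard' : (t.erase (t.max' ht)).card = n + 1 := by
      rw [Finset.card_erase_of_mem (t.max'_mem ht), hcard, Nat.add_sub_cancel]
    rw [← Finset.insert_erase (t.max'_mem ht), Finset.image_insert,
      hend _ _ (fun x hx => t.lt_max'_of_mem_erase_max' ht hx) hcard']
    exact hHi _ ((Finset.coe_subset.2 (t.erase_subset _)).trans htH) hcard'

section

variable {W : Type*} [LinearOrder W]

/-- The `j` smallest elements of `s` (all of `s` if `s.card ≤ j`). -/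
def Finset.initSeg (s : Finset W) (j : ℕ) : Finset W :=
  s.filter fun x => (s.filter (· < x)).card < j

theorem Finset.initSeg_union {t u : Finset W} (htu : ∀ x ∈ t, ∀ y ∈ u, x < y) :
    (t ∪ u).initSeg t.card = t := by
  ext x
  rw [Finset.initSeg, Finset.mem_filter, Finset.mem_union]
  constructor
  · rintro ⟨hx | hx, hcard⟩
    · exact hx
    · refine absurd hcard (not_lt.2 (Finset.card_le_card fun y hy => ?_))
      exact Finset.mem_filter.2 ⟨Finset.mem_union_left _ hy, htu y hy x hx⟩
  · intro hx
    refine ⟨Or.inl hx, lt_of_le_of_lt (Finset.card_le_card fun y hy => ?_)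
      (Finset.card_lt_card ((Finset.filter_ssubset (p := (· < x))).2 ⟨x, hx, lt_irrefl x⟩))⟩
    obtain ⟨hy, hyx⟩ := Finset.mem_filter.1 hy
    rcases Finset.mem_union.1 hy with hy | hy
    · exact Finset.mem_filter.2 ⟨hy, hyx⟩
    · exact absurd (htu x hx y hy) (not_lt.2 hyx.le)

theorem Set.finite_setOf_finite_inter_Ioi [WellFoundedLT W] (S : Set W) :
    {x ∈ S | (S ∩ Set.Ioi x).Finite}.Finite := by
  set B := {x ∈ S | (S ∩ Set.Ioi x).Finite}
  rcases B.eq_empty_or_nonempty with hB | hB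
  · rw [hB]
    exact Set.finite_empty
  set x := wellFounded_lt.min B hB
  have hx : x ∈ B := wellFounded_lt.min_mem B hB
  refine (hx.2.insert x).subset fun y hy => ?_
  rcases (wellFounded_lt.min_le hy).eq_or_lt with h | h
  · exact Or.inl h.symm
  · exact Or.inr ⟨hy.1, h⟩

theorem exists_subset_card_eq_forall_infinite_inter_Ioi [WellFoundedLT W] {ν : Cardinal}
    (hν : ℵ₀ ≤ ν) {S : Set W} (hS : ν < #S) :
    ∃ H ⊆ S, #H = ν ∧ ∀ x ∈ H, (S ∩ Set.Ioi x).Infinite := by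
  set B := {x ∈ S | (S ∩ Set.Ioi x).Finite}
  have hB : #B < ℵ₀ := lt_aleph0_iff_set_finite.2 (Set.finite_setOf_finite_inter_Ioi S)
  have hSB : ν ≤ #(S \ B : Set W) := by
    by_contra! h
    refine hS.not_ge ((mk_le_mk_of_subset fun x hx => ?_).trans
      (mk_union_le _ _) |>.trans (add_lt_of_lt hν h (hB.trans_le hν)).le)
    by_cases hxB : x ∈ B
    exacts [Or.inr hxB, Or.inl ⟨hx, hxB⟩]
  obtain ⟨H, hHSB, hH⟩ := le_mk_iff_exists_subset.1 hSB
  exact ⟨H, fun x hx => (hHSB hx).1, hH, fun x hx hfin => (hHSB hx).2 ⟨(hHSB hx).1, hfin⟩⟩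

theorem exists_finset_subset_card_eq_forall_lt {S H : Set W} (hS : S.Infinite)
    (hH : ∀ x ∈ H, (S ∩ Set.Ioi x).Infinite) {t : Finset W} (ht : ↑t ⊆ H) (m : ℕ) :
    ∃ u : Finset W, ↑u ⊆ S ∧ u.card = m ∧ ∀ x ∈ t, ∀ y ∈ u, x < y := by
  have habove : {y ∈ S | ∀ x ∈ t, x < y}.Infinite := by
    rcases t.eq_empty_or_nonempty with rfl | hne
    · simpa using hS
    refine (hH _ (ht (t.max'_mem hne))).mono fun y hy => ⟨hy.1, fun x hx => ?_⟩
    exact (t.le_max' x hx).trans_lt hy.2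
  obtain ⟨u, hu, hucard⟩ := habove.exists_subset_card_eq m
  exact ⟨u, fun y hy => (hu hy).1, hucard, fun x hx y hy => (hu hy).2 x hx⟩

end

theorem exists_card_eq_forall_eq_of_card_eq {ν : Cardinal.{u}} (hν : ℵ₀ ≤ ν) {ι : Type u}
    (hι : #ι ≤ ν) (N : ℕ) {α : Type u} (hα : (2 ^ ·)^[N] ν < #α) (F : Finset α → ι) :
    ∃ H : Set α, #H = ν ∧ ∀ t u : Finset α, ↑t ⊆ H → ↑u ⊆ H → t.card = u.card →
      t.card ≤ N + 1 → F t = F u := by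
  classical
  obtain ⟨_, _⟩ := exists_wellFoundedLT α
  obtain ⟨S, v, hS, hv⟩ := erdos_rado hν (ι := Fin (N + 2) → ι)
    (by rw [mk_arrow, lift_uzero, mk_fin, lift_natCast]
        exact (power_le_power_right hι).trans (power_nat_le hν)) N hα
    fun s j => F (s.initSeg j)
  obtain ⟨H, hHS, hH, hHabove⟩ := exists_subset_card_eq_forall_infinite_inter_Ioi hν hS
  refine ⟨H, hH, ?_⟩
  suffices key : ∀ t : Finset α, ↑t ⊆ H → (ht : t.card ≤ N + 1) →
      F t = v ⟨t.card, Nat.lt_succ_of_le ht⟩ by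
    intro t u htH huH hcard ht
    rw [key t htH ht, key u huH (hcard ▸ ht)]
    simp only [hcard]
  intro t htH ht
  obtain ⟨u, hu, hucard, htu⟩ := exists_finset_subset_card_eq_forall_lt
    (Set.infinite_coe_iff.1 (infinite_iff.2 (hν.trans hS.le))) hHabove htH (N + 1 - t.card)
  have hs := hv (t ∪ u) (by rw [Finset.coe_union]; exact Set.union_subset (htH.trans hHS) hu)
    (by
      rw [Finset.card_union_of_disjoint (Finset.disjoint_left.2 fun x hx hxu =>
        lt_irrefl x (htu x hx x hxu)), hucard]
      omega)
  rw [← congrFun hs ⟨t.card, _⟩, Finset.initSeg_union htu]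

theorem coe_tupSum {G : Type u} [AddCommSemigroup G] {m : ℕ} (g : Fin (m + 1) → G) :
    ((tupSum g : G) : WithZero G) = ∑ i, (g i : WithZero G) := by
  induction m with
  | zero => simp [tupSum]
  | succ m ih =>
    rw [tupSum, WithZero.coe_add, ih, Fin.sum_univ_castSucc fun i => (g i : WithZero G)]

/-- Uncountable Hindman–Schur theorem. -/
theorem stmt2 (l : Cardinal.{u}) (hl : ℵ₀ ≤ l) (c : ℕ) (hc : 0 < c) :
    ∃ κ : Cardinal.{u}, l < κ ∧
      ∀ (G : Type u) [AddCommSemigroup G], #G = κ →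
        ∀ f : G → Fin c, ∃ H : Set G, #H = l ∧
          ∃ a b : ℕ, 0 < a ∧ 0 < b ∧ ∃ i : Fin c,
            FSMono f {a, b, a + b} H i := by
  classical
  obtain ⟨N, hN⟩ := exists_schur_bound (Fin c)
  refine ⟨Order.succ ((2 ^ ·)^[N] l), (le_iterate_two_power l N).trans_lt (Order.lt_succ _),
    fun G _ hG f => ?_⟩
  -- the empty sum gets an arbitrary colour
  let F (t : Finset G) : ULift.{u} (Fin c) :=
    ⟨WithZero.recZeroCoe ⟨0, hc⟩ f (∑ x ∈ t, (x : WithZero G))⟩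
  obtain ⟨H, hH, hHF⟩ := exists_card_eq_forall_eq_of_card_eq hl
    ((lt_aleph0_of_finite _).le.trans hl) N (by rw [hG]; exact Order.lt_succ _) F
  choose T hTH hTcard using
    (Set.infinite_coe_iff.1 (infinite_iff.2 (hH ▸ hl))).exists_subset_card_eq
  obtain ⟨a, b, ha, hb, hab, hdab, hdaba⟩ := hN fun k => (F (T k)).down
  refine ⟨H, hH, a, b, ha, hb, (F (T a)).down, fun m hm g hg hgH => ?_⟩
  have hcard : (Finset.univ.image g).card = m + 1 := by
    rw [Finset.card_image_of_injective _ hg, Finset.card_fin]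
  have hsum : f (tupSum g) = (F (Finset.univ.image g)).down := by
    simp only [F, Finset.sum_image fun x _ y _ h => hg h, ← coe_tupSum]
    rfl
  simp only [Set.mem_insert_iff, Set.mem_singleton_iff] at hm
  rw [hsum, hHF _ (T (m + 1)) (by simpa [Set.range_subset_iff] using hgH) (hTH _)
    (by rw [hcard, hTcard]) (by omega)]
  rcases hm with h | h | h <;> rw [h]
  exacts [hdab.symm, hdaba]
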